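/- Let γ < 1 with γ ≠ 0, let μ ∈ ℝⁿ, let Σ be an n×n symmetric positive semidefinite real matrix, and let Θ ⊆ ℝⁿ be nonempty with the Markowitz objective f(θ) = μᵀθ + ((γ−1)/2)·θᵀΣθ bounded above on Θ, with supremum r_ce. Let a : ℝ → ℝ be differentiable with a(t) > 0 for all t, and suppose a satisfies the ordinary differential equation −a′(t) = (1−γ)·a(t)^{γ/(γ−1)} + γ·r_ce·a(t). Then the candidate value function V(t, w) = a(t)·w^γ/γ satisfies the Hamilton–Jacobi–Bellman equation: for every t and every w > 0, −∂V/∂t (t, w) = −a′(t)·w^γ/γ equals the supremum over all c > 0 and θ ∈ Θ of c^γ/γ + a(t)·w^{γ−1}·(μᵀθ·w − c) + (1/2)·a(t)·(γ−1)·w^{γ−2}·(θᵀΣθ)·w². -/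

import Mathlib

/-!
Writing `k = a(t)·w^(γ-1)` and `A = a(t)·w^γ`, the Hamiltonian splits as
`(c^γ/γ - k·c) + A·f(θ)`, a function of `c` plus a function of `θ`, so its supremum is the sum
of the two suprema. The first is the convex conjugate of the power utility,
`(1-γ)/γ · k^(γ/(γ-1))`, attained at `c = k^(1/(γ-1))`; the second is `A·r_ce`. The ODE for `a`
says exactly that their sum is `-a'(t)·w^γ/γ`.
-/

open Matrix Set Real
open scoped Pointwise

namespace Real

/-- Tangent-line bound for the concave function `u ↦ u^γ/γ` at `u = 1`. -/
lemma rpow_div_sub_le {γ u : ℝ} (hγ : γ < 1) (hγ0 : γ ≠ 0) (hu : 0 < u) :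
    u ^ γ / γ - u ≤ (1 - γ) / γ := by
  suffices h : (u ^ γ - (γ * u + (1 - γ))) / γ ≤ 0 by
    have e : (u ^ γ - (γ * u + (1 - γ))) / γ = u ^ γ / γ - u - (1 - γ) / γ := by
      field_simp; ring
    linarith
  rcases hγ0.lt_or_gt with hneg | hpos
  · have bernoulli : γ * u + (1 - γ) ≤ u ^ γ :=
      calc γ * u + (1 - γ) = γ * (u - 1) + 1 := by ring
        _ ≤ γ * log u + 1 := by nlinarith [log_le_sub_one_of_pos hu]
        _ ≤ u ^ γ := by rw [rpow_def_of_pos hu, mul_comm]; exact add_one_le_exp _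
    exact div_nonpos_of_nonneg_of_nonpos (by linarith) hneg.le
  · have bernoulli : u ^ γ ≤ γ * u + (1 - γ) := by
      have := rpow_one_add_le_one_add_mul_self (s := u - 1) (by linarith) hpos.le hγ.le
      rw [add_sub_cancel] at this
      linarith
    exact div_nonpos_of_nonpos_of_nonneg (by linarith) hpos.le

lemma isGreatest_rpow_div_sub_mul {γ k : ℝ} (hγ : γ < 1) (hγ0 : γ ≠ 0) (hk : 0 < k) :
    IsGreatest ((fun c => c ^ γ / γ - k * c) '' Ioi 0) ((1 - γ) / γ * k ^ (γ / (γ - 1))) := by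
  have hγ1 : γ - 1 ≠ 0 := sub_ne_zero.mpr hγ.ne
  set c₀ := k ^ (1 / (γ - 1)) with hc₀_def
  have hc₀ : 0 < c₀ := rpow_pos_of_pos hk _
  have hc₀_rpow : c₀ ^ γ = k ^ (γ / (γ - 1)) := by
    rw [hc₀_def, ← rpow_mul hk.le]; congr 1; field_simp
  have hk_mul_c₀ : k * c₀ = k ^ (γ / (γ - 1)) := by
    have hexp : 1 + 1 / (γ - 1) = γ / (γ - 1) := by field_simp; ring
    rw [hc₀_def, ← rpow_one_add' hk.le (hexp ▸ div_ne_zero hγ0 hγ1), hexp]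
  have scale : ∀ u > 0, (u * c₀) ^ γ / γ - k * (u * c₀) = k ^ (γ / (γ - 1)) * (u ^ γ / γ - u) := by
    intro u hu
    rw [mul_rpow hu.le hc₀.le, hc₀_rpow, ← mul_assoc, mul_comm k u, mul_assoc, hk_mul_c₀]
    ring
  refine ⟨⟨c₀, hc₀, ?_⟩, ?_⟩
  · have := scale 1 one_pos
    simp only [one_mul, one_rpow] at this
    change c₀ ^ γ / γ - k * c₀ = _
    rw [this]; field_simp
  · rintro _ ⟨c, hc, rfl⟩
    have hc_eq : c = c / c₀ * c₀ := (div_mul_cancel₀ c hc₀.ne').symm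
    change c ^ γ / γ - k * c ≤ _
    rw [hc_eq, scale _ (div_pos hc hc₀), mul_comm _ (k ^ _)]
    exact mul_le_mul_of_nonneg_left (rpow_div_sub_le hγ hγ0 (div_pos hc hc₀))
      (rpow_pos_of_pos hk _).le

end Real

lemma IsLUB.image_const_mul {α G₀ : Type*} [GroupWithZero G₀] [PartialOrder G₀]
    [PosMulReflectLT G₀] {f : α → G₀} {s : Set α} {a b : G₀} (ha : 0 < a)
    (h : IsLUB (f '' s) b) : IsLUB ((fun x => a * f x) '' s) (a * b) :=
  image_image (a * ·) f s ▸ (OrderIso.mulLeft₀ a ha).isLUB_image'.mpr h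

lemma Set.image_add_image_eq_setOf {α β M : Type*} [Add M] (g : α → M) (h : β → M)
    (s : Set α) (t : Set β) : g '' s + h '' t = {v | ∃ x ∈ s, ∃ y ∈ t, v = g x + h y} := by
  ext v
  constructor
  · rintro ⟨_, ⟨x, hx, rfl⟩, _, ⟨y, hy, rfl⟩, rfl⟩
    exact ⟨x, hx, y, hy, rfl⟩
  · rintro ⟨x, hx, y, hy, rfl⟩
    exact add_mem_add (mem_image_of_mem g hx) (mem_image_of_mem h hy)

lemma hamiltonian_eq_consumption_add_portfolio {γ w : ℝ} (hw : 0 < w) (a c m q : ℝ) :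
    c ^ γ / γ + a * w ^ (γ - 1) * (m * w - c) + 1 / 2 * a * (γ - 1) * w ^ (γ - 2) * q * w ^ 2
      = (c ^ γ / γ - a * w ^ (γ - 1) * c) + a * w ^ γ * (m + (γ - 1) / 2 * q) := by
  have h₁ : w ^ (γ - 1) * w = w ^ γ := by
    rw [← rpow_add_one hw.ne', sub_add_cancel]
  have h₂ : w ^ (γ - 2) * w ^ 2 = w ^ γ := by
    rw [← rpow_natCast, ← rpow_add hw, Nat.cast_ofNat, sub_add_cancel]
  linear_combination a * m * h₁ + a * (γ - 1) / 2 * q * h₂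

theorem candidate_value_function_satisfies_hjb_general
    (n : ℕ) (γ : ℝ) (hγ : γ < 1) (hγ0 : γ ≠ 0)
    (μ : Fin n → ℝ) (S : Matrix (Fin n) (Fin n) ℝ)
    (Θ : Set (Fin n → ℝ)) (hne : Θ.Nonempty)
    (hbdd : BddAbove ((fun θ => μ ⬝ᵥ θ + (γ - 1) / 2 * (θ ⬝ᵥ (S *ᵥ θ))) '' Θ))
    (r_ce : ℝ)
    (hr : r_ce = sSup ((fun θ => μ ⬝ᵥ θ + (γ - 1) / 2 * (θ ⬝ᵥ (S *ᵥ θ))) '' Θ))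
    (a : ℝ → ℝ) (hpos : ∀ t, 0 < a t)
    (hode : ∀ t, -deriv a t = (1 - γ) * a t ^ (γ / (γ - 1)) + γ * r_ce * a t) :
    ∀ t : ℝ, ∀ w > (0 : ℝ),
      -deriv a t * w ^ γ / γ =
        sSup {v : ℝ | ∃ c > (0 : ℝ), ∃ θ ∈ Θ,
          v = c ^ γ / γ + a t * w ^ (γ - 1) * ((μ ⬝ᵥ θ) * w - c)
              + 1 / 2 * a t * (γ - 1) * w ^ (γ - 2) * (θ ⬝ᵥ (S *ᵥ θ)) * w ^ 2} := by
  intro t w hw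
  simp_rw [hamiltonian_eq_consumption_add_portfolio hw]
  set f := fun θ => μ ⬝ᵥ θ + (γ - 1) / 2 * (θ ⬝ᵥ (S *ᵥ θ))
  set k := a t * w ^ (γ - 1) with hk_def
  set A := a t * w ^ γ with hA_def
  have hk : 0 < k := mul_pos (hpos t) (rpow_pos_of_pos hw _)
  have hA : 0 < A := mul_pos (hpos t) (rpow_pos_of_pos hw _)
  have hvalue : -deriv a t * w ^ γ / γ = (1 - γ) / γ * k ^ (γ / (γ - 1)) + A * r_ce := by
    have hk_rpow : k ^ (γ / (γ - 1)) = a t ^ (γ / (γ - 1)) * w ^ γ := by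
      rw [hk_def, mul_rpow (hpos t).le (rpow_nonneg hw.le _), ← rpow_mul hw.le,
        mul_div_cancel₀ _ (sub_ne_zero.mpr hγ.ne)]
    rw [hode t, hk_rpow, hA_def]
    field_simp
  have hconsumption := isGreatest_rpow_div_sub_mul hγ hγ0 hk
  have hportfolio : IsLUB ((fun θ => A * f θ) '' Θ) (A * r_ce) :=
    (hr ▸ isLUB_csSup (hne.image f) hbdd).image_const_mul hA
  rw [hvalue, ← (hconsumption.isLUB.add hportfolio).csSup_eq
    ((nonempty_Ioi.image _).add (hne.image _)), image_add_image_eq_setOf]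
  rfl

/-- If the positive differentiable coefficient `a` satisfies the ODE
`-a′(t) = (1-γ)·a(t)^(γ/(γ-1)) + γ·r_ce·a(t)`, then the candidate value function
`V(t,w) = a(t)·w^γ/γ` satisfies the HJB equation: `-∂V/∂t(t,w) = -a′(t)·w^γ/γ` equals
the supremum over `c > 0`, `θ ∈ Θ` of
`c^γ/γ + a(t)·w^(γ-1)·(μᵀθ·w - c) + (1/2)·a(t)·(γ-1)·w^(γ-2)·(θᵀΣθ)·w²`. -/
theorem candidate_value_function_satisfies_hjb
    (n : ℕ) (γ : ℝ) (hγ : γ < 1) (hγ0 : γ ≠ 0)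
    (μ : Fin n → ℝ) (S : Matrix (Fin n) (Fin n) ℝ)
    (hsymm : S.IsSymm) (hpsd : S.PosSemidef)
    (Θ : Set (Fin n → ℝ)) (hne : Θ.Nonempty)
    (hbdd : BddAbove ((fun θ => μ ⬝ᵥ θ + (γ - 1) / 2 * (θ ⬝ᵥ (S *ᵥ θ))) '' Θ))
    (r_ce : ℝ)
    (hr : r_ce = sSup ((fun θ => μ ⬝ᵥ θ + (γ - 1) / 2 * (θ ⬝ᵥ (S *ᵥ θ))) '' Θ))
    (a : ℝ → ℝ) (hdiff : Differentiable ℝ a) (hpos : ∀ t, 0 < a t)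
    (hode : ∀ t, -deriv a t = (1 - γ) * a t ^ (γ / (γ - 1)) + γ * r_ce * a t) :
    ∀ t : ℝ, ∀ w > (0 : ℝ),
      -deriv a t * w ^ γ / γ =
        sSup {v : ℝ | ∃ c > (0 : ℝ), ∃ θ ∈ Θ,
          v = c ^ γ / γ + a t * w ^ (γ - 1) * ((μ ⬝ᵥ θ) * w - c)
              + 1 / 2 * a t * (γ - 1) * w ^ (γ - 2) * (θ ⬝ᵥ (S *ᵥ θ)) * w ^ 2} :=
  candidate_value_function_satisfies_hjb_general n γ hγ hγ0 μ S Θ hne hbdd r_ce hr a hpos hode
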